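/- arXiv:1110.0160 — 2 statements merged into one kernel-verified Lean document; each statement's English description precedes it below -/
import Mathlib

section
/- Let X_1,…,X_N be random variables taking values in {1,…,m} ∪ {∞} such that almost surely each a ∈ {1,…,m} appears exactly r times. Set S_k(a) = #{i ≤ k : X_i = a} (so S_k(a) ≤ r), let F̂_k = σ(X_1,…,X_k), and suppose that for some c > 0 and all a ∈ {1,…,m} and 0 ≤ k < N, almost surely on the event {S_k(a) < r} one has P(X_{k+1} = a | F̂_k) > c/m. Let D_k = #{a ∈ {1,…,m} : S_k(a) = r}. Then for every ε > 0 there exist constants c₁, c₂ > 0, depending only on c, r and ε (and in particular not on m or N), such that P(D_K ≤ (1−ε)m) < e^{−c₂ m}, where K = min(⌈c₁ m⌉, N). -/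
/-!
Write `D_k = numFilled` for the number of full counters and `T_k = totalCount` for the total count
at time `k`. While at least `εm` counters are unfilled, the conditional probability that step
`k + 1` hits some counter is at least `εm · c/m = cε`. Since each step raises `T` by `0` or `1`,
and `e^{-x} = 1 - (1 - e⁻¹) x` for `x ∈ {0, 1}`, the weight `W_k = 1{D_k ≤ (1-ε)m} · e^{-T_k}`
(the indicator only decreases in `k`) satisfies `E W_{k+1} ≤ (1 - δ) E W_k ≤ e^{-δ} E W_k` with
`δ = (1 - e⁻¹) cε`. As `T_K ≤ rm`, this gives `P(D_K ≤ (1-ε)m) ≤ e^{rm} E W_K ≤ e^{rm - δK}`,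
which is below `e^{-m}` once `K ≥ (r + 2) m / δ`. If instead `K = N`, the event is null, since
all counters are full at time `N`.
-/

open MeasureTheory

noncomputable section

/-- The σ-algebra `σ(X_1, …, X_i)` generated by the random variables `X_1, …, X_i`
(taking values in the countable space `ℕ∞ = {1,…} ∪ {∞}`, endowed with the discrete
σ-algebra `⊤`). -/
def sigmaX {Ω : Type*} (X : ℕ → Ω → ℕ∞) (i : ℕ) : MeasurableSpace Ω :=
  ⨆ k ∈ Finset.Icc 1 i, MeasurableSpace.comap (X k) ⊤

/-- The σ-algebra `F_i = σ(X_1, …, X_i, A_1, …, A_{i-1})`. -/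
def sigmaXA {Ω : Type*} (X : ℕ → Ω → ℕ∞) (A : ℕ → Set Ω) (i : ℕ) : MeasurableSpace Ω :=
  sigmaX X i ⊔ ⨆ k ∈ Finset.Icc 1 (i - 1), MeasurableSpace.generateFrom {A k}

/-- `S_k(a) = #{i ≤ k : X_i = a}`. -/
def countX {Ω : Type*} (X : ℕ → Ω → ℕ∞) (k a : ℕ) (ω : Ω) : ℕ :=
  ((Finset.Icc 1 k).filter fun i => X i ω = (a : ℕ∞)).card

open Finset

section Counters

variable {Ω : Type*} (X : ℕ → Ω → ℕ∞)

lemma countX_mono {k k' : ℕ} (h : k ≤ k') (a : ℕ) (ω : Ω) :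
    countX X k a ω ≤ countX X k' a ω :=
  card_le_card (filter_subset_filter _ (Icc_subset_Icc_right h))

lemma countX_succ (k a : ℕ) (ω : Ω) :
    countX X (k + 1) a ω = countX X k a ω + if X (k + 1) ω = (a : ℕ∞) then 1 else 0 := by
  rw [countX, ← insert_Icc_right_eq_Icc_add_one (by omega : 1 ≤ k + 1), filter_insert]
  split_ifs
  · exact card_insert_of_notMem (by simp)
  · rfl

variable (r m : ℕ)

def numFilled (k : ℕ) (ω : Ω) : ℕ := #{a ∈ Icc 1 m | countX X k a ω = r}

def totalCount (k : ℕ) (ω : Ω) : ℕ := ∑ a ∈ Icc 1 m, countX X k a ω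

def newHits (k : ℕ) (ω : Ω) : ℕ := #{a ∈ Icc 1 m | X (k + 1) ω = ((a : ℕ) : ℕ∞)}

lemma newHits_le_one (k : ℕ) (ω : Ω) : newHits X m k ω ≤ 1 :=
  card_le_one.mpr fun a ha b hb => by
    simp only [mem_filter] at ha hb
    exact_mod_cast ha.2.symm.trans hb.2

lemma totalCount_succ (k : ℕ) (ω : Ω) :
    totalCount X m (k + 1) ω = totalCount X m k ω + newHits X m k ω := by
  simp only [totalCount, newHits, countX_succ, sum_add_distrib, card_filter]

lemma numFilled_mono {k k' : ℕ} (h : k ≤ k') {ω : Ω}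
    (hle : ∀ a ∈ Icc 1 m, countX X k' a ω ≤ r) :
    numFilled X r m k ω ≤ numFilled X r m k' ω :=
  card_le_card fun a ha => by
    simp only [mem_filter] at ha ⊢
    exact ⟨ha.1, le_antisymm (hle a ha.1) (ha.2 ▸ countX_mono X h a ω)⟩

lemma totalCount_le {k : ℕ} {ω : Ω} (hle : ∀ a ∈ Icc 1 m, countX X k a ω ≤ r) :
    totalCount X m k ω ≤ r * m := by
  simpa [totalCount, mul_comm] using sum_le_card_nsmul _ _ _ hle

lemma numFilled_eq_of_forall_eq {k : ℕ} {ω : Ω} (h : ∀ a ∈ Icc 1 m, countX X k a ω = r) :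
    numFilled X r m k ω = m := by
  rw [numFilled, filter_true_of_mem h, Nat.card_Icc, Nat.add_sub_cancel]

lemma numFilled_add_card_filter_countX_lt {k : ℕ} {ω : Ω}
    (hle : ∀ a ∈ Icc 1 m, countX X k a ω ≤ r) :
    numFilled X r m k ω + #{a ∈ Icc 1 m | countX X k a ω < r} = m := by
  rw [numFilled, ← filter_congr fun a ha => (hle a ha).lt_iff_ne.symm,
    card_filter_add_card_filter_not, Nat.card_Icc, Nat.add_sub_cancel]

lemma newHits_eq_sum_indicator (k : ℕ) :
    (fun ω => (newHits X m k ω : ℝ))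
      = ∑ a ∈ Icc 1 m, {ω | X (k + 1) ω = (a : ℕ∞)}.indicator fun _ => (1 : ℝ) := by
  ext ω
  simp [newHits, Set.indicator_apply]

end Counters

section Measurability

lemma sigmaX_le {Ω : Type*} [mΩ : MeasurableSpace Ω] {X : ℕ → Ω → ℕ∞}
    (hX : ∀ i, @Measurable Ω ℕ∞ _ ⊤ (X i)) (k : ℕ) : sigmaX X k ≤ mΩ :=
  iSup₂_le fun i _ => (hX i).comap_le

variable {Ω : Type*} (X : ℕ → Ω → ℕ∞)

lemma measurableSet_sigmaX_eq {k i : ℕ} (hi : i ∈ Icc 1 k) (a : ℕ∞) :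
    MeasurableSet[sigmaX X k] {ω | X i ω = a} :=
  le_iSup₂ (f := fun j _ => MeasurableSpace.comap (X j) ⊤) i hi _ ⟨{a}, trivial, rfl⟩

lemma measurable_countX (k a : ℕ) : Measurable[sigmaX X k] (countX X k a) := by
  unfold countX
  simp only [card_filter]
  exact Finset.measurable_sum _ fun i hi =>
    Measurable.ite (measurableSet_sigmaX_eq X hi a) measurable_const measurable_const

variable (r m : ℕ)

lemma measurable_numFilled (k : ℕ) : Measurable[sigmaX X k] (numFilled X r m k) := by
  unfold numFilled
  simp only [card_filter]
  exact Finset.measurable_sum _ fun a _ =>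
    Measurable.ite (measurable_countX X k a (measurableSet_singleton r))
      measurable_const measurable_const

lemma measurable_totalCount (k : ℕ) : Measurable[sigmaX X k] (totalCount X m k) :=
  Finset.measurable_sum _ fun a _ => measurable_countX X k a

end Measurability

lemma Real.exp_neg_natCast_of_le_one {n : ℕ} (hn : n ≤ 1) :
    Real.exp (-n) = 1 - (1 - Real.exp (-1)) * n := by
  interval_cases n <;> simp

lemma MeasureTheory.mul_integral_le_integral_mul_of_le_condExp {Ω : Type*}
    {m mΩ : MeasurableSpace Ω} {μ : Measure Ω} [IsFiniteMeasure μ] (hm : m ≤ mΩ)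
    {W I : Ω → ℝ} {p C : ℝ} (hW : StronglyMeasurable[m] W) (hW0 : 0 ≤ W) (hWC : ∀ ω, W ω ≤ C)
    (hI : Integrable I μ) (hp : ∀ᵐ ω ∂μ, W ω ≠ 0 → p ≤ μ[I | m] ω) :
    p * ∫ ω, W ω ∂μ ≤ ∫ ω, W ω * I ω ∂μ := by
  have hWbound : ∀ᵐ ω ∂μ, ‖W ω‖ ≤ C := .of_forall fun ω => by
    rw [Real.norm_of_nonneg (hW0 ω)]; exact hWC ω
  have hWint : Integrable W μ := .of_bound (hW.mono hm).aestronglyMeasurable C hWbound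
  have hpull := condExp_stronglyMeasurable_mul_of_bound hm hW hI C hWbound
  calc p * ∫ ω, W ω ∂μ = ∫ ω, W ω * p ∂μ := by rw [integral_mul_const, mul_comm]
    _ ≤ ∫ ω, W ω * μ[I | m] ω ∂μ := by
      refine integral_mono_ae (hWint.mul_const p)
        (integrable_condExp.bdd_mul (hW.mono hm).aestronglyMeasurable hWbound) ?_
      filter_upwards [hp] with ω hω
      rcases (hW0 ω).eq_or_lt with h | h
      · simp [← h]
      · exact mul_le_mul_of_nonneg_left (hω h.ne') h.le
    _ = ∫ ω, μ[W * I | m] ω ∂μ := integral_congr_ae hpull.symm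
    _ = ∫ ω, W ω * I ω ∂μ := integral_condExp hm

section Weight

variable {Ω : Type*} (X : ℕ → Ω → ℕ∞) (r m : ℕ) (ε : ℝ)

def unfilledEvent (k : ℕ) : Set Ω := {ω | (numFilled X r m k ω : ℝ) ≤ (1 - ε) * m}

def weight (k : ℕ) : Ω → ℝ :=
  (unfilledEvent X r m ε k).indicator fun ω => Real.exp (-(totalCount X m k ω))

lemma measurableSet_unfilledEvent (k : ℕ) :
    MeasurableSet[sigmaX X k] (unfilledEvent X r m ε k) :=
  measurableSet_le (measurable_from_nat.comp (measurable_numFilled X r m k)) measurable_const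

lemma stronglyMeasurable_weight (k : ℕ) : StronglyMeasurable[sigmaX X k] (weight X r m ε k) :=
  ((Real.measurable_exp.comp (measurable_from_nat.comp (measurable_totalCount X m k)).neg).indicator
    (measurableSet_unfilledEvent X r m ε k)).stronglyMeasurable

lemma weight_nonneg (k : ℕ) : 0 ≤ weight X r m ε k :=
  Set.indicator_nonneg fun _ _ => (Real.exp_pos _).le

lemma weight_le_one (k : ℕ) (ω : Ω) : weight X r m ε k ω ≤ 1 :=
  Set.indicator_apply_le' (fun _ => Real.exp_le_one_iff.mpr (by simp)) fun _ => zero_le_one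

lemma norm_weight_le_one (k : ℕ) (ω : Ω) : ‖weight X r m ε k ω‖ ≤ 1 := by
  rw [Real.norm_of_nonneg (weight_nonneg X r m ε k ω)]
  exact weight_le_one X r m ε k ω

lemma weight_succ_le {k : ℕ} {ω : Ω} (hle : ∀ a ∈ Icc 1 m, countX X (k + 1) a ω ≤ r) :
    weight X r m ε (k + 1) ω ≤ weight X r m ε k ω * Real.exp (-(newHits X m k ω)) := by
  by_cases hω : ω ∈ unfilledEvent X r m ε (k + 1)
  · have hω' : ω ∈ unfilledEvent X r m ε k :=
      show (numFilled X r m k ω : ℝ) ≤ _ from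
        (Nat.cast_le.mpr (numFilled_mono X r m k.le_succ hle)).trans hω
    rw [weight, weight, Set.indicator_of_mem hω, Set.indicator_of_mem hω', ← Real.exp_add,
      totalCount_succ, Nat.cast_add, neg_add]
  · rw [weight, Set.indicator_of_notMem hω]
    exact mul_nonneg (weight_nonneg X r m ε k ω) (Real.exp_pos _).le

end Weight

section Step

variable {Ω : Type*} [MeasurableSpace Ω] {P : Measure Ω}
  {X : ℕ → Ω → ℕ∞} {r m : ℕ} {ε : ℝ}

lemma integrable_weight [IsFiniteMeasure P] (hX : ∀ i, @Measurable Ω ℕ∞ _ ⊤ (X i)) (k : ℕ) :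
    Integrable (weight X r m ε k) P :=
  .of_bound ((stronglyMeasurable_weight X r m ε k).mono (sigmaX_le hX k)).aestronglyMeasurable 1
    (.of_forall (norm_weight_le_one X r m ε k))

lemma integrable_indicator_eq [IsFiniteMeasure P] (hX : ∀ i, @Measurable Ω ℕ∞ _ ⊤ (X i))
    (i : ℕ) (a : ℕ∞) : Integrable ({ω | X i ω = a}.indicator fun _ => (1 : ℝ)) P :=
  (integrable_const 1).indicator (hX i (MeasurableSpace.measurableSet_top (s := {a})))

lemma condExp_newHits_ge [IsFiniteMeasure P] (hX : ∀ i, @Measurable Ω ℕ∞ _ ⊤ (X i))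
    {c : ℝ} (hc : 0 ≤ c) (hm : 0 < m) {k : ℕ}
    (hle : ∀ᵐ ω ∂P, ∀ a ∈ Icc 1 m, countX X k a ω ≤ r)
    (hcond : ∀ a ∈ Icc 1 m, ∀ᵐ ω ∂P, countX X k a ω < r →
      c / m < (P[{ω' | X (k + 1) ω' = (a : ℕ∞)}.indicator (fun _ => (1 : ℝ)) | sigmaX X k]) ω) :
    ∀ᵐ ω ∂P, ω ∈ unfilledEvent X r m ε k →
      c * ε ≤ (P[fun ω => (newHits X m k ω : ℝ) | sigmaX X k]) ω := by
  set f : ℕ → Ω → ℝ := fun a => {ω | X (k + 1) ω = (a : ℕ∞)}.indicator fun _ => 1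
  have hsum : P[fun ω => (newHits X m k ω : ℝ) | sigmaX X k]
      =ᵐ[P] ∑ a ∈ Icc 1 m, P[f a | sigmaX X k] := by
    rw [newHits_eq_sum_indicator]
    exact condExp_finsetSum (fun a _ => integrable_indicator_eq hX _ _) _
  have hnonneg : ∀ᵐ ω ∂P, ∀ a ∈ Icc 1 m, 0 ≤ P[f a | sigmaX X k] ω :=
    (Filter.eventually_all_finset _).mpr fun a _ =>
      condExp_nonneg (.of_forall (Set.indicator_nonneg fun _ _ => zero_le_one))
  filter_upwards [hsum, hnonneg, (Filter.eventually_all_finset _).mpr hcond, hle]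
    with ω hsum hnonneg hcond hle hω
  set U := {a ∈ Icc 1 m | countX X k a ω < r}
  have hU : ε * m ≤ #U := by
    have := numFilled_add_card_filter_countX_lt X r m hle
    have : (numFilled X r m k ω : ℝ) + #U = m := by exact_mod_cast this
    linarith [show (numFilled X r m k ω : ℝ) ≤ (1 - ε) * m from hω]
  calc c * ε = (ε * m) * (c / m) := by field_simp
    _ ≤ #U * (c / m) := by gcongr
    _ = ∑ a ∈ U, c / m := by rw [sum_const, nsmul_eq_mul]
    _ ≤ ∑ a ∈ U, P[f a | sigmaX X k] ω :=
      sum_le_sum fun a ha => (hcond a (mem_filter.mp ha).1 (mem_filter.mp ha).2).le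
    _ ≤ ∑ a ∈ Icc 1 m, P[f a | sigmaX X k] ω :=
      sum_le_sum_of_subset_of_nonneg (filter_subset _ _) fun a ha _ => hnonneg a ha
    _ = P[fun ω => (newHits X m k ω : ℝ) | sigmaX X k] ω := by rw [hsum, Finset.sum_apply]

lemma integral_weight_succ_le [IsFiniteMeasure P] (hX : ∀ i, @Measurable Ω ℕ∞ _ ⊤ (X i))
    {p : ℝ} {k : ℕ} (hle : ∀ᵐ ω ∂P, ∀ a ∈ Icc 1 m, countX X (k + 1) a ω ≤ r)
    (hp : ∀ᵐ ω ∂P, ω ∈ unfilledEvent X r m ε k →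
      p ≤ (P[fun ω => (newHits X m k ω : ℝ) | sigmaX X k]) ω) :
    ∫ ω, weight X r m ε (k + 1) ω ∂P
      ≤ Real.exp (-((1 - Real.exp (-1)) * p)) * ∫ ω, weight X r m ε k ω ∂P := by
  set W := weight X r m ε k
  set hits : Ω → ℝ := fun ω => (newHits X m k ω : ℝ)
  have hhits : Integrable hits P := by
    rw [show hits = _ from newHits_eq_sum_indicator X m k]
    exact integrable_finsetSum' _ fun a _ => integrable_indicator_eq hX _ _
  have hW := integrable_weight (P := P) (r := r) (m := m) (ε := ε) hX k
  have hmix : p * ∫ ω, W ω ∂P ≤ ∫ ω, W ω * hits ω ∂P :=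
    mul_integral_le_integral_mul_of_le_condExp (sigmaX_le hX k) (stronglyMeasurable_weight ..)
      (weight_nonneg X r m ε k) (weight_le_one X r m ε k) hhits <|
      hp.mono fun ω h hW0 => h (Set.mem_of_indicator_ne_zero hW0)
  have hmix_int : Integrable (fun ω => W ω * hits ω) P :=
    hhits.bdd_mul hW.aestronglyMeasurable (c := 1) (.of_forall (norm_weight_le_one X r m ε k))
  calc ∫ ω, weight X r m ε (k + 1) ω ∂P
      ≤ ∫ ω, W ω - (1 - Real.exp (-1)) * (W ω * hits ω) ∂P := by
        refine integral_mono_ae (integrable_weight hX _) (hW.sub (hmix_int.const_mul _)) ?_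
        filter_upwards [hle] with ω hω
        refine (weight_succ_le X r m ε hω).trans_eq ?_
        rw [Real.exp_neg_natCast_of_le_one (newHits_le_one X m k ω)]
        ring
    _ = ∫ ω, W ω ∂P - (1 - Real.exp (-1)) * ∫ ω, W ω * hits ω ∂P := by
        rw [integral_sub hW (hmix_int.const_mul _), integral_const_mul]
    _ ≤ (1 - (1 - Real.exp (-1)) * p) * ∫ ω, W ω ∂P := by
        have : 0 ≤ 1 - Real.exp (-1) := by simp [Real.exp_le_one_iff]
        nlinarith
    _ ≤ Real.exp (-((1 - Real.exp (-1)) * p)) * ∫ ω, W ω ∂P := by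
        gcongr
        · exact integral_nonneg (weight_nonneg X r m ε k)
        · linarith [Real.add_one_le_exp (-((1 - Real.exp (-1)) * p))]

lemma integral_weight_le [IsProbabilityMeasure P] (hX : ∀ i, @Measurable Ω ℕ∞ _ ⊤ (X i))
    {c : ℝ} (hc : 0 ≤ c) (hm : 0 < m) {N : ℕ}
    (hfull : ∀ᵐ ω ∂P, ∀ a ∈ Icc 1 m, countX X N a ω = r)
    (hcond : ∀ a ∈ Icc 1 m, ∀ k < N, ∀ᵐ ω ∂P, countX X k a ω < r →
      c / m < (P[{ω' | X (k + 1) ω' = (a : ℕ∞)}.indicator (fun _ => (1 : ℝ)) | sigmaX X k]) ω)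
    {K : ℕ} (hK : K ≤ N) :
    ∫ ω, weight X r m ε K ω ∂P ≤ Real.exp (-((1 - Real.exp (-1)) * (c * ε)) * K) := by
  have hle : ∀ k ≤ N, ∀ᵐ ω ∂P, ∀ a ∈ Icc 1 m, countX X k a ω ≤ r := fun k hk =>
    hfull.mono fun ω h a ha => (countX_mono X hk a ω).trans (h a ha).le
  set δ := (1 - Real.exp (-1)) * (c * ε)
  induction K with
  | zero =>
    simpa using integral_mono (integrable_weight (P := P) hX 0) (integrable_const 1)
      (weight_le_one X r m ε 0)
  | succ k ih =>
    calc ∫ ω, weight X r m ε (k + 1) ω ∂P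
        ≤ Real.exp (-δ) * ∫ ω, weight X r m ε k ω ∂P :=
          integral_weight_succ_le hX (hle (k + 1) hK) <|
            condExp_newHits_ge hX hc hm (hle k (by omega)) fun a ha => hcond a ha k hK
      _ ≤ Real.exp (-δ) * Real.exp (-δ * k) := by gcongr; exact ih (by omega)
      _ = Real.exp (-δ * ↑(k + 1)) := by rw [← Real.exp_add]; push_cast; ring_nf

end Step

section Tail

variable {Ω : Type*} [MeasurableSpace Ω] {P : Measure Ω} {X : ℕ → Ω → ℕ∞} {r m : ℕ} {ε : ℝ}

lemma exp_mul_measure_unfilledEvent_le [IsFiniteMeasure P]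
    (hX : ∀ i, @Measurable Ω ℕ∞ _ ⊤ (X i)) {K : ℕ}
    (hle : ∀ᵐ ω ∂P, ∀ a ∈ Icc 1 m, countX X K a ω ≤ r) :
    Real.exp (-(r * m)) * P.real (unfilledEvent X r m ε K)
      ≤ ∫ ω, weight X r m ε K ω ∂P := by
  have hE : MeasurableSet (unfilledEvent X r m ε K) :=
    sigmaX_le hX K _ (measurableSet_unfilledEvent X r m ε K)
  rw [mul_comm, ← smul_eq_mul, ← integral_indicator_const _ hE]
  refine integral_mono_ae ((integrable_const _).indicator hE) (integrable_weight hX K) ?_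
  filter_upwards [hle] with ω hω
  refine Set.indicator_le_indicator (Real.exp_le_exp.mpr (neg_le_neg ?_))
  exact_mod_cast totalCount_le X r m hω

lemma measure_unfilledEvent_eq_zero (hε : 0 < ε) (hm : 0 < m) {N : ℕ}
    (hfull : ∀ᵐ ω ∂P, ∀ a ∈ Icc 1 m, countX X N a ω = r) :
    P (unfilledEvent X r m ε N) = 0 :=
  measure_eq_zero_iff_ae_notMem.mpr <| hfull.mono fun ω h hω => by
    have hle : (m : ℝ) ≤ (1 - ε) * m := by
      simpa [unfilledEvent, numFilled_eq_of_forall_eq X r m h] using hω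
    nlinarith [show (0 : ℝ) < m by exact_mod_cast hm]

lemma measureReal_unfilledEvent_le [IsProbabilityMeasure P]
    (hX : ∀ i, @Measurable Ω ℕ∞ _ ⊤ (X i)) {c : ℝ} (hc : 0 ≤ c) (hm : 0 < m) {N : ℕ}
    (hfull : ∀ᵐ ω ∂P, ∀ a ∈ Icc 1 m, countX X N a ω = r)
    (hcond : ∀ a ∈ Icc 1 m, ∀ k < N, ∀ᵐ ω ∂P, countX X k a ω < r →
      c / m < (P[{ω' | X (k + 1) ω' = (a : ℕ∞)}.indicator (fun _ => (1 : ℝ)) | sigmaX X k]) ω)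
    {K : ℕ} (hK : K ≤ N) :
    P.real (unfilledEvent X r m ε K) ≤ Real.exp (r * m - (1 - Real.exp (-1)) * (c * ε) * K) := by
  have hle : ∀ᵐ ω ∂P, ∀ a ∈ Icc 1 m, countX X K a ω ≤ r :=
    hfull.mono fun ω h a ha => (countX_mono X hK a ω).trans (h a ha).le
  have hbound := (exp_mul_measure_unfilledEvent_le (ε := ε) hX hle).trans
    (integral_weight_le hX hc hm hfull hcond hK)
  calc P.real (unfilledEvent X r m ε K)
      = Real.exp (r * m) * (Real.exp (-(r * m)) * P.real (unfilledEvent X r m ε K)) := by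
        rw [← mul_assoc, ← Real.exp_add, add_neg_cancel, Real.exp_zero, one_mul]
    _ ≤ Real.exp (r * m) * Real.exp (-((1 - Real.exp (-1)) * (c * ε)) * K) := by gcongr
    _ = Real.exp (r * m - (1 - Real.exp (-1)) * (c * ε) * K) := by
        rw [← Real.exp_add]; ring_nf

end Tail

theorem counters_fill_in_linear_time_general (r : ℕ) (c : ℝ) (hc : 0 < c)
    (ε : ℝ) (hε : 0 < ε) :
    ∃ c₁ c₂ : ℝ, 0 < c₁ ∧ 0 < c₂ ∧
      ∀ (Ω : Type*) [MeasurableSpace Ω] (P : Measure Ω) [IsProbabilityMeasure P]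
        (N m : ℕ), 0 < N → 0 < m →
        ∀ X : ℕ → Ω → ℕ∞, (∀ i, @Measurable Ω ℕ∞ _ ⊤ (X i)) →
        (∀ᵐ ω ∂P, ∀ i ∈ Finset.Icc 1 N,
          X i ω = ⊤ ∨ ∃ a ∈ Finset.Icc 1 m, X i ω = (a : ℕ∞)) →
        (∀ᵐ ω ∂P, ∀ a ∈ Finset.Icc 1 m, countX X N a ω = r) →
        (∀ a ∈ Finset.Icc 1 m, ∀ k < N, ∀ᵐ ω ∂P, countX X k a ω < r →
          c / m < (P[Set.indicator {ω' | X (k + 1) ω' = (a : ℕ∞)}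
            (fun _ => (1 : ℝ)) | sigmaX X k]) ω) →
        (P {ω | (((Finset.Icc 1 m).filter fun a =>
            countX X (min ⌈c₁ * (m : ℝ)⌉₊ N) a ω = r).card : ℝ) ≤ (1 - ε) * m}).toReal <
          Real.exp (-c₂ * m) := by
  set δ := (1 - Real.exp (-1)) * (c * ε)
  have hδ : 0 < δ := mul_pos (by simp) (mul_pos hc hε)
  refine ⟨(r + 2) / δ, 1, by positivity, one_pos, ?_⟩
  intro Ω _ P _ N m _ hm X hX _ hfull hcond
  rcases le_or_gt ⌈(r + 2) / δ * (m : ℝ)⌉₊ N with hKN | hNK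
  · rw [min_eq_left hKN]
    have hδK : (r + 2) * m ≤ δ * ⌈(r + 2) / δ * (m : ℝ)⌉₊ :=
      calc (r + 2) * m = δ * ((r + 2) / δ * m) := by field_simp
        _ ≤ δ * ⌈(r + 2) / δ * (m : ℝ)⌉₊ := by gcongr; exact Nat.le_ceil _
    refine (measureReal_unfilledEvent_le hX hc.le hm hfull hcond hKN).trans_lt
      (Real.exp_lt_exp.mpr ?_)
    linarith [show (0 : ℝ) < m by exact_mod_cast hm]
  · rw [min_eq_right hNK.le]
    exact (congrArg ENNReal.toReal (measure_unfilledEvent_eq_zero hε hm hfull)).trans_lt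
      (by simpa using Real.exp_pos _)

/-- **Lemma (linear time estimate).** Let `X_1, …, X_N` take values in `{1,…,m} ∪ {∞}`,
a.s. each `a ∈ {1,…,m}` appearing exactly `r` times, and suppose that on the event
`{S_k(a) < r}` one a.s. has `P(X_{k+1} = a ∣ σ(X_1,…,X_k)) > c/m`.  Let
`D_k = #{a : S_k(a) = r}`.  For every `ε > 0` there are constants `c₁, c₂ > 0` depending
only on `c, r, ε` (not on `m`, `N`, or the process) such that
`P(D_K ≤ (1-ε) m) < e^{-c₂ m}` where `K = min(⌈c₁ m⌉, N)`. -/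
theorem counters_fill_in_linear_time (r : ℕ) (hr : 0 < r) (c : ℝ) (hc : 0 < c)
    (ε : ℝ) (hε : 0 < ε) :
    ∃ c₁ c₂ : ℝ, 0 < c₁ ∧ 0 < c₂ ∧
      ∀ (Ω : Type*) [MeasurableSpace Ω] (P : Measure Ω) [IsProbabilityMeasure P]
        (N m : ℕ), 0 < N → 0 < m →
        ∀ X : ℕ → Ω → ℕ∞, (∀ i, @Measurable Ω ℕ∞ _ ⊤ (X i)) →
        (∀ᵐ ω ∂P, ∀ i ∈ Finset.Icc 1 N,
          X i ω = ⊤ ∨ ∃ a ∈ Finset.Icc 1 m, X i ω = (a : ℕ∞)) →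
        (∀ᵐ ω ∂P, ∀ a ∈ Finset.Icc 1 m, countX X N a ω = r) →
        (∀ a ∈ Finset.Icc 1 m, ∀ k < N, ∀ᵐ ω ∂P, countX X k a ω < r →
          c / m < (P[Set.indicator {ω' | X (k + 1) ω' = (a : ℕ∞)}
            (fun _ => (1 : ℝ)) | sigmaX X k]) ω) →
        (P {ω | (((Finset.Icc 1 m).filter fun a =>
            countX X (min ⌈c₁ * (m : ℝ)⌉₊ N) a ω = r).card : ℝ) ≤ (1 - ε) * m}).toReal <
          Real.exp (-c₂ * m) :=
  counters_fill_in_linear_time_general r c hc ε hε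
end
end

section
/- Let (Ω, F, P) be a probability space with a filtration F′_1 ⊆ … ⊆ F′_{N+1} ⊆ F, let p ∈ (0,1], and let A′_1,…,A′_N be events with A′_i ∈ F′_{i+1} and P(A′_i | F′_i) = p almost surely for every i. Let X_1,…,X_N be random variables taking values in {1,…,m} ∪ {∞} such that σ(X_1,…,X_i) ⊆ F′_i for every i and such that almost surely each a ∈ {1,…,m} appears exactly r times in the sequence X_1,…,X_N. For a ∈ {1,…,m} set G′_a = ∩_{i=1}^N ({X_i ≠ a} ∪ A′_i). Then for every subset S ⊆ {1,…,m}, P(∩_{a∈S} G′_a) = p^{r|S|}; in particular the events G′_1,…,G′_m are mutually independent and each has probability p^r. -/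
/-
Fix `S` and call index `i` selected if `X i ∈ S`. The weight
`M_k = ∏_{i ≤ k} (if i is selected then 𝟙_{A_i} / p else 1)` equals `p^{-C_k}` on the event `B_k`
that every selected `A_i` with `i ≤ k` occurs, where `C_k` is the number of selected indices, and
vanishes off `B_k`. It is a martingale: `M_k` and the selection of `k + 1` are
`F_{k+1}`-measurable, while `P(A_{k+1} | F_{k+1}) = p`, so the new factor has conditional mean `1`.
Hence `E[M_N] = 1`, and as `C_N = r |S|` almost surely, `P(B_N) = p^{r |S|}`.
-/

open MeasureTheory

noncomputable section

open Finset

section SurvivalWeight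

variable {Ω : Type*}

open Classical in
def survivalFactor (E A : Set Ω) (p : ℝ) (ω : Ω) : ℝ :=
  if ω ∈ E then p⁻¹ * A.indicator (fun _ => 1) ω else 1

def survivalWeight (E A : ℕ → Set Ω) (p : ℝ) (k : ℕ) (ω : Ω) : ℝ :=
  ∏ i ∈ Icc 1 k, survivalFactor (E i) (A i) p ω

variable (E A : ℕ → Set Ω) (p : ℝ)

lemma survivalWeight_succ (k : ℕ) :
    survivalWeight E A p (k + 1) =
      survivalWeight E A p k * survivalFactor (E (k + 1)) (A (k + 1)) p := by
  ext ω
  exact prod_Icc_succ_top (by omega) _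

open Classical in
lemma survivalWeight_apply (k : ℕ) (ω : Ω) :
    survivalWeight E A p k ω = if ∀ i ∈ Icc 1 k, ω ∈ E i → ω ∈ A i
      then p⁻¹ ^ #{i ∈ Icc 1 k | ω ∈ E i} else 0 := by
  unfold survivalWeight survivalFactor
  rw [prod_ite, prod_const_one, mul_one, prod_mul_distrib, prod_const]
  simp only [Set.indicator_apply, prod_boole, mem_filter, and_imp, mul_ite, mul_one,
    mul_zero]

lemma abs_survivalWeight_le (k : ℕ) (ω : Ω) : |survivalWeight E A p k ω| ≤ (|p|⁻¹ + 1) ^ k := by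
  classical
  have hfactor : ∀ i, |survivalFactor (E i) (A i) p ω| ≤ |p|⁻¹ + 1 := by
    intro i
    unfold survivalFactor
    split_ifs
    · have hind : |(A i).indicator (fun _ => (1 : ℝ)) ω| ≤ 1 := by
        by_cases hω : ω ∈ A i <;> simp [hω]
      calc |p⁻¹ * (A i).indicator (fun _ => 1) ω| ≤ |p|⁻¹ * 1 := by
            rw [abs_mul, abs_inv]
            exact mul_le_mul_of_nonneg_left hind (by positivity)
        _ ≤ |p|⁻¹ + 1 := by linarith
    · simp
  calc |survivalWeight E A p k ω|
      = ∏ i ∈ Icc 1 k, |survivalFactor (E i) (A i) p ω| := abs_prod _ _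
    _ ≤ ∏ _i ∈ Icc 1 k, (|p|⁻¹ + 1) := prod_le_prod (fun _ _ => abs_nonneg _) fun i _ => hfactor i
    _ = (|p|⁻¹ + 1) ^ k := by simp

lemma measurable_survivalWeight {M : MeasurableSpace Ω} {k : ℕ}
    (hE : ∀ i ∈ Icc 1 k, MeasurableSet[M] (E i)) (hA : ∀ i ∈ Icc 1 k, MeasurableSet[M] (A i)) :
    Measurable[M] (survivalWeight E A p k) :=
  Finset.measurable_prod _ fun i hi =>
    Measurable.ite (hE i hi) (measurable_const.mul (measurable_const.indicator (hA i hi)))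
      measurable_const

lemma integrable_survivalWeight {mΩ : MeasurableSpace Ω} {P : Measure Ω} [IsFiniteMeasure P]
    {k : ℕ} (hm : Measurable (survivalWeight E A p k)) : Integrable (survivalWeight E A p k) P :=
  .of_bound hm.aestronglyMeasurable _ <| ae_of_all _ fun ω => abs_survivalWeight_le E A p k ω

end SurvivalWeight

section Conditioning

variable {Ω : Type*} {F mΩ : MeasurableSpace Ω} {P : Measure Ω} [IsFiniteMeasure P]
  {p : ℝ} {A : Set Ω}

lemma setIntegral_eq_mul_integral_of_condExp_indicator (hF : F ≤ mΩ) (hA : MeasurableSet A)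
    (hcond : ∀ᵐ ω ∂P, P[A.indicator (fun _ => (1 : ℝ)) | F] ω = p) {g : Ω → ℝ}
    (hg : StronglyMeasurable[F] g) (hgi : Integrable g P) :
    ∫ ω in A, g ω ∂P = p * ∫ ω, g ω ∂P := by
  have hind : g * A.indicator (fun _ => 1) = A.indicator g := by
    ext ω
    by_cases hω : ω ∈ A <;> simp [hω]
  have hint : Integrable (g * A.indicator (fun _ => 1)) P := hind ▸ hgi.indicator hA
  calc ∫ ω in A, g ω ∂P = ∫ ω, (g * A.indicator (fun _ => (1 : ℝ))) ω ∂P := by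
        rw [hind, integral_indicator hA]
    _ = ∫ ω, P[g * A.indicator (fun _ => 1) | F] ω ∂P := (integral_condExp hF).symm
    _ = ∫ ω, g ω * p ∂P := by
        refine integral_congr_ae ?_
        filter_upwards [condExp_mul_of_stronglyMeasurable_left hg hint
          ((integrable_const 1).indicator hA), hcond] with ω h hω
        rw [h, Pi.mul_apply, hω]
    _ = p * ∫ ω, g ω ∂P := by rw [integral_mul_const, mul_comm]

lemma integral_mul_survivalFactor (hF : F ≤ mΩ) {E : Set Ω} (hE : MeasurableSet[F] E)
    (hA : MeasurableSet A) (hcond : ∀ᵐ ω ∂P, P[A.indicator (fun _ => (1 : ℝ)) | F] ω = p)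
    (hp : p ≠ 0) {g : Ω → ℝ} (hg : StronglyMeasurable[F] g) (hgi : Integrable g P) :
    ∫ ω, g ω * survivalFactor E A p ω ∂P = ∫ ω, g ω ∂P := by
  have hE' : MeasurableSet E := hF _ hE
  have hsplit : (fun ω => g ω * survivalFactor E A p ω) =
      fun ω => Eᶜ.indicator g ω + p⁻¹ * A.indicator (E.indicator g) ω := by
    ext ω
    by_cases hω : ω ∈ E <;> by_cases hωA : ω ∈ A <;> simp [survivalFactor, hω, hωA, mul_comm]
  rw [hsplit,
    integral_add (hgi.indicator hE'.compl) (((hgi.indicator hE').indicator hA).const_mul _),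
    integral_const_mul, integral_indicator hA,
    setIntegral_eq_mul_integral_of_condExp_indicator hF hA hcond (hg.indicator hE)
      (hgi.indicator hE'),
    inv_mul_cancel_left₀ hp, integral_indicator hE'.compl, integral_indicator hE', add_comm,
    integral_add_compl hE' hgi]

end Conditioning

section Survival

variable {Ω : Type*} {mΩ : MeasurableSpace Ω} {P : Measure Ω} {N : ℕ}
  {F : ℕ → MeasurableSpace Ω} {E A : ℕ → Set Ω} {p : ℝ}
  (hmono : ∀ i j : ℕ, 1 ≤ i → i ≤ j → j ≤ N + 1 → F i ≤ F j)
  (hle : ∀ i ∈ Icc 1 (N + 1), F i ≤ mΩ)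
  (hA : ∀ i ∈ Icc 1 N, MeasurableSet[F (i + 1)] (A i))
  (hE : ∀ i ∈ Icc 1 N, MeasurableSet[F i] (E i))
include hmono hA hE

lemma measurable_survivalWeight_of_lt {k j : ℕ} (hkj : k < j) (hj : j ≤ N + 1) :
    Measurable[F j] (survivalWeight E A p k) := by
  refine measurable_survivalWeight E A p (fun i hi => ?_) fun i hi => ?_ <;>
    obtain ⟨hi1, hik⟩ := mem_Icc.1 hi
  · exact hmono i j hi1 (by omega) hj _ (hE i (mem_Icc.2 ⟨hi1, by omega⟩))
  · exact hmono (i + 1) j (by omega) (by omega) hj _ (hA i (mem_Icc.2 ⟨hi1, by omega⟩))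

include hle

lemma integral_survivalWeight [IsProbabilityMeasure P]
    (hcond : ∀ i ∈ Icc 1 N, ∀ᵐ ω ∂P, P[(A i).indicator (fun _ => (1 : ℝ)) | F i] ω = p)
    (hp : p ≠ 0) {k : ℕ} (hk : k ≤ N) : ∫ ω, survivalWeight E A p k ω ∂P = 1 := by
  induction k with
  | zero => simp [survivalWeight]
  | succ k ih =>
    have hk' : k + 1 ∈ Icc 1 N := mem_Icc.2 ⟨by omega, hk⟩
    have hF : F (k + 1) ≤ mΩ := hle _ (mem_Icc.2 ⟨by omega, by omega⟩)
    have hmeas := measurable_survivalWeight_of_lt (p := p) hmono hA hE k.lt_succ_self (by omega)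
    rw [survivalWeight_succ]
    refine (integral_mul_survivalFactor hF (hE _ hk')
      (hle _ (mem_Icc.2 ⟨by omega, by omega⟩) _ (hA _ hk')) (hcond _ hk') hp
      hmeas.stronglyMeasurable (integrable_survivalWeight E A p (hmeas.mono hF le_rfl))).trans
      (ih (by omega))

open Classical in
theorem measureReal_forall_mem_imp_mem_eq_pow [IsProbabilityMeasure P] {R : ℕ}
    (hcond : ∀ i ∈ Icc 1 N, ∀ᵐ ω ∂P, P[(A i).indicator (fun _ => (1 : ℝ)) | F i] ω = p)
    (hp : p ≠ 0) (hcount : ∀ᵐ ω ∂P, #{i ∈ Icc 1 N | ω ∈ E i} = R) :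
    P.real {ω | ∀ i ∈ Icc 1 N, ω ∈ E i → ω ∈ A i} = p ^ R := by
  set B := {ω | ∀ i ∈ Icc 1 N, ω ∈ E i → ω ∈ A i}
  have hB : MeasurableSet B := by
    have : B = ⋂ i ∈ Icc 1 N, (E i)ᶜ ∪ A i := by
      ext ω
      simp only [B, Set.mem_ofPred_eq, Set.mem_iInter, Set.mem_union, Set.mem_compl_iff,
        imp_iff_not_or]
    rw [this]
    refine Finset.measurableSet_biInter _ fun i hi => ?_
    obtain ⟨hi1, hiN⟩ := mem_Icc.1 hi
    exact (hle i (mem_Icc.2 ⟨hi1, by omega⟩) _ (hE i hi)).compl.union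
      (hle (i + 1) (mem_Icc.2 ⟨by omega, by omega⟩) _ (hA i hi))
  have hweight : survivalWeight E A p N =ᵐ[P] B.indicator fun _ => p⁻¹ ^ R := by
    filter_upwards [hcount] with ω hω
    rw [survivalWeight_apply, hω, Set.indicator_apply]
    congr 1
  have hmean := integral_survivalWeight hmono hle hA hE hcond hp le_rfl
  rw [integral_congr_ae hweight, integral_indicator_const _ hB, smul_eq_mul] at hmean
  rw [eq_inv_of_mul_eq_one_left hmean, inv_pow, inv_inv]

end Survival

lemma card_filter_exists_eq_sum_countX {Ω : Type*} (X : ℕ → Ω → ℕ∞) (S : Finset ℕ) (k : ℕ)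
    (ω : Ω) : #{i ∈ Icc 1 k | ∃ a ∈ S, X i ω = a} = ∑ a ∈ S, countX X k a ω := by
  simp only [countX]
  rw [← card_biUnion]
  · congr 1
    ext i
    simp only [mem_filter, mem_biUnion]
    tauto
  · intro a _ b _ hab
    exact disjoint_filter.2 fun i _ ha hb => hab (Nat.cast_injective (ha.symm.trans hb))

theorem events_G_independent_general {Ω : Type*} [MeasurableSpace Ω]
    (P : Measure Ω) [IsProbabilityMeasure P] (N m r : ℕ) (F : ℕ → MeasurableSpace Ω)
    (hmono : ∀ i j : ℕ, 1 ≤ i → i ≤ j → j ≤ N + 1 → F i ≤ F j)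
    (hle : ∀ i ∈ Finset.Icc 1 (N + 1), F i ≤ ‹MeasurableSpace Ω›)
    (p : ℝ) (hp0 : 0 < p)
    (A : ℕ → Set Ω) (hA : ∀ i ∈ Finset.Icc 1 N, MeasurableSet[F (i + 1)] (A i))
    (hcond : ∀ i ∈ Finset.Icc 1 N, ∀ᵐ ω ∂P,
      (P[(A i).indicator (fun _ => (1 : ℝ)) | F i]) ω = p)
    (X : ℕ → Ω → ℕ∞)
    (hXadapted : ∀ i ∈ Finset.Icc 1 N, ∀ k ∈ Finset.Icc 1 i,
      @Measurable Ω ℕ∞ (F i) ⊤ (X k))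
    (hXcount : ∀ᵐ ω ∂P, ∀ a ∈ Finset.Icc 1 m, countX X N a ω = r) :
    ∀ S : Finset ℕ, S ⊆ Finset.Icc 1 m →
      (P (⋂ a ∈ S, {ω | ∀ i ∈ Finset.Icc 1 N, X i ω = (a : ℕ∞) → ω ∈ A i})).toReal =
        p ^ (r * S.card) := by
  intro S hS
  set E : ℕ → Set Ω := fun i => {ω | ∃ a ∈ S, X i ω = a}
  have hE : ∀ i ∈ Icc 1 N, MeasurableSet[F i] (E i) := fun i hi =>
    hXadapted i hi i (mem_Icc.2 ⟨(mem_Icc.1 hi).1, le_rfl⟩)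
      (MeasurableSpace.measurableSet_top (s := {x : ℕ∞ | ∃ a ∈ S, x = a}))
  have hset : (⋂ a ∈ S, {ω | ∀ i ∈ Icc 1 N, X i ω = (a : ℕ∞) → ω ∈ A i}) =
      {ω | ∀ i ∈ Icc 1 N, ω ∈ E i → ω ∈ A i} := by
    ext ω
    simp only [E, Set.mem_iInter, Set.mem_ofPred_eq, forall_exists_index, and_imp]
    tauto
  rw [hset]
  refine measureReal_forall_mem_imp_mem_eq_pow hmono hle hA hE hcond hp0.ne' ?_
  filter_upwards [hXcount] with ω hω
  rw [mul_comm, ← sum_const_nat fun a ha => hω a (hS ha), ← card_filter_exists_eq_sum_countX]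
  -- the two filters differ only in their decidability instances
  convert rfl
  exact Iff.rfl

/-- **Lemma (independence of the events `G'_a`).** Let `F'_1 ⊆ ⋯ ⊆ F'_{N+1}` be a
filtration, `p ∈ (0,1]`, and `A'_1, …, A'_N` events with `A'_i ∈ F'_{i+1}` and
`P(A'_i ∣ F'_i) = p` a.s.  Let `X_1, …, X_N` be random variables adapted to the filtration
(`σ(X_1,…,X_i) ⊆ F'_i`) with values in `{1,…,m} ∪ {∞}`, a.s. each `a ∈ {1,…,m}`
appearing exactly `r` times.  With `G'_a = ⋂_{i=1}^N ({X_i ≠ a} ∪ A'_i)`, for every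
`S ⊆ {1,…,m}` we have `P(⋂_{a ∈ S} G'_a) = p^{r |S|}`; in particular the events `G'_a`
are mutually independent, each of probability `p^r`. -/
theorem events_G_independent {Ω : Type*} [MeasurableSpace Ω]
    (P : Measure Ω) [IsProbabilityMeasure P] (N m r : ℕ) (hN : 0 < N) (hm : 0 < m)
    (hr : 0 < r) (F : ℕ → MeasurableSpace Ω)
    (hmono : ∀ i j : ℕ, 1 ≤ i → i ≤ j → j ≤ N + 1 → F i ≤ F j)
    (hle : ∀ i ∈ Finset.Icc 1 (N + 1), F i ≤ ‹MeasurableSpace Ω›)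
    (p : ℝ) (hp0 : 0 < p) (hp1 : p ≤ 1)
    (A : ℕ → Set Ω) (hA : ∀ i ∈ Finset.Icc 1 N, MeasurableSet[F (i + 1)] (A i))
    (hcond : ∀ i ∈ Finset.Icc 1 N, ∀ᵐ ω ∂P,
      (P[(A i).indicator (fun _ => (1 : ℝ)) | F i]) ω = p)
    (X : ℕ → Ω → ℕ∞)
    (hXadapted : ∀ i ∈ Finset.Icc 1 N, ∀ k ∈ Finset.Icc 1 i,
      @Measurable Ω ℕ∞ (F i) ⊤ (X k))
    (hXval : ∀ᵐ ω ∂P, ∀ i ∈ Finset.Icc 1 N,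
      X i ω = ⊤ ∨ ∃ a ∈ Finset.Icc 1 m, X i ω = (a : ℕ∞))
    (hXcount : ∀ᵐ ω ∂P, ∀ a ∈ Finset.Icc 1 m, countX X N a ω = r) :
    ∀ S : Finset ℕ, S ⊆ Finset.Icc 1 m →
      (P (⋂ a ∈ S, {ω | ∀ i ∈ Finset.Icc 1 N, X i ω = (a : ℕ∞) → ω ∈ A i})).toReal =
        p ^ (r * S.card) :=
  events_G_independent_general P N m r F hmono hle p hp0 A hA hcond X hXadapted hXcount
end
end
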